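/- Let C be a braided monoidal category in which every object has a left dual, and assume that the tensor product of a projective object with any object (on either side) is again projective. Then an object M of C is projective if and only if there exists some n ≥ 1 such that the n-fold tensor power M^{⊗n} is projective. -/
import Mathlib


open CategoryTheory MonoidalCategory

/-- `tensorPow M n` is the `n`-fold tensor power `M^{⊗n}` of `M`,
with `M^{⊗1} = M` (and the convention `M^{⊗0} = 𝟙_ C`). -/
def tensorPow {C : Type*} [Category C] [MonoidalCategory C] (M : C) : ℕ → C
  | 0 => 𝟙_ C
  | 1 => M
  | n + 2 => tensorPow M (n + 1) ⊗ M

section Aux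

variable {C : Type*} [Category C] [MonoidalCategory C]

/-- Projectivity descends along retracts. -/
theorem projective_of_retract {P X : C} (i : X ⟶ P) (r : P ⟶ X) (hir : i ≫ r = 𝟙 X)
    (hP : Projective P) : Projective X := by
  constructor
  intro E Y f e he
  obtain ⟨g, hg⟩ := hP.factors (r ≫ f) e
  exact ⟨i ≫ g, by rw [Category.assoc, hg, ← Category.assoc, hir, Category.id_comp]⟩

/-- The zig-zag retract: `M` is a retract of `(M ⊗ ᘁM) ⊗ M`. -/
theorem zigzag_retract (M : C) [HasLeftDual M] :
    ((ρ_ M).inv ≫ M ◁ (η_ (ᘁM) M) ≫ (α_ M (ᘁM) M).inv) ≫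
      ((ε_ (ᘁM) M) ▷ M ≫ (λ_ M).hom) = 𝟙 M := by
  have h := ExactPairing.coevaluation_evaluation (ᘁM) M
  simp only [Category.assoc]
  rw [reassoc_of% h]
  simp

/-- Rearrangement iso in a braided category. -/
noncomputable def rearrangeIso (M : C) [BraidedCategory C] [HasLeftDual M] :
    (M ⊗ ᘁM) ⊗ M ≅ (M ⊗ M) ⊗ ᘁM :=
  α_ M (ᘁM) M ≪≫ whiskerLeftIso M (β_ (ᘁM) M) ≪≫ (α_ M M (ᘁM)).symm

variable [BraidedCategory C] [∀ X : C, HasLeftDual X]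

/-- Unwhiskered descent: if `M ⊗ M` is projective then so is `M`. -/
theorem descend_base (hP₁ : ∀ P X : C, Projective P → Projective (P ⊗ X))
    (M : C) (h : Projective (M ⊗ M)) : Projective M := by
  have h1 : Projective ((M ⊗ M) ⊗ ᘁM) := hP₁ _ _ h
  have h2 : Projective ((M ⊗ ᘁM) ⊗ M) := Projective.of_iso (rearrangeIso M).symm h1
  exact projective_of_retract _ _ (zigzag_retract M) h2

/-- Whiskered descent: if `(K ⊗ M) ⊗ M` is projective then so is `K ⊗ M`. -/
theorem descend_step (hP₁ : ∀ P X : C, Projective P → Projective (P ⊗ X))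
    (K M : C) (h : Projective ((K ⊗ M) ⊗ M)) : Projective (K ⊗ M) := by
  have h1 : Projective (((K ⊗ M) ⊗ M) ⊗ ᘁM) := hP₁ _ _ h
  have e : K ⊗ ((M ⊗ ᘁM) ⊗ M) ≅ ((K ⊗ M) ⊗ M) ⊗ ᘁM :=
    whiskerLeftIso K (rearrangeIso M) ≪≫ (α_ K (M ⊗ M) (ᘁM)).symm ≪≫
      whiskerRightIso (α_ K M M).symm (ᘁM)
  have h2 : Projective (K ⊗ ((M ⊗ ᘁM) ⊗ M)) := Projective.of_iso e.symm h1
  refine projective_of_retract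
    (K ◁ ((ρ_ M).inv ≫ M ◁ (η_ (ᘁM) M) ≫ (α_ M (ᘁM) M).inv))
    (K ◁ ((ε_ (ᘁM) M) ▷ M ≫ (λ_ M).hom)) ?_ h2
  rw [← MonoidalCategory.whiskerLeft_comp, zigzag_retract, MonoidalCategory.whiskerLeft_id]

end Aux

/-- In a braided monoidal category in which every object has a left dual and in which
the tensor product of a projective object with any object (on either side) is projective,
an object `M` is projective iff some tensor power `M^{⊗n}` with `n ≥ 1` is projective. -/
theorem projective_iff_exists_tensorPow_projective
    {C : Type*} [Category C] [MonoidalCategory C] [BraidedCategory C]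
    [∀ X : C, HasLeftDual X]
    (hP₁ : ∀ P X : C, Projective P → Projective (P ⊗ X))
    (hP₂ : ∀ P X : C, Projective P → Projective (X ⊗ P))
    (M : C) :
    Projective M ↔ ∃ n : ℕ, 1 ≤ n ∧ Projective (tensorPow M n) := by
  constructor
  · intro h
    exact ⟨1, le_refl 1, h⟩
  · rintro ⟨n, hn, h⟩
    -- descend by induction: Projective (tensorPow M (k+1)) → Projective M
    obtain ⟨k, rfl⟩ : ∃ k, n = k + 1 := ⟨n - 1, (Nat.succ_pred_eq_of_pos hn).symm⟩
    clear hn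
    induction k with
    | zero => exact h
    | succ m ih =>
      apply ih
      cases m with
      | zero =>
        -- tensorPow M 2 = M ⊗ M
        exact descend_base hP₁ M h
      | succ l =>
        -- tensorPow M (l+3) = (tensorPow M (l+1) ⊗ M) ⊗ M
        exact descend_step hP₁ (tensorPow M (l + 1)) M h
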